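/- Suppose r_1 = (4 − 4α_1² − 6α_2 − 2α_1α_2 + 3α_1²α_2 − 4α_2² + 3α_2³)/(4(−4 + α_1² − α_1α_2 + α_2²)) and s_1 = (4 − 6α_1 − 4α_1² + 3α_1³ − 2α_1α_2 − 4α_2² + 3α_1α_2²)/(4(−4 + α_1² − α_1α_2 + α_2²)). Then ⟨f̃_{0,1}, f̃_{2,1}⟩ = ρ(α_1, α_2) / ( 12 (−4 + α_1² − α_1α_2 + α_2²)(8 − 6α_1 + α_1² − 6α_2 + 2α_1α_2 + α_2²) ); in particular ⟨f̃_{0,1}, f̃_{2,1}⟩ = 0 if and only if ρ(α_1, α_2) = 0. -/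

import Mathlib

/-!
Splitting `∫₀¹` at `1/2` and substituting the self-affinity equations expresses `∫ f`, `∫ u f`
and `∫ f g` through themselves. For two self-affine FIFs with the same scalings this is a
triangular linear system for the five moments, with pivots `2 - α₁ - α₂`, `4 - α₁ - α₂` and
`2 - α₁² - α₂²`, all positive when `|αᵢ| < 1`. Solving it with the given `r₁`, `s₁` is a
rational-function identity in `α₁, α₂`.
-/

open Set

/-- `f` is the self-affine FIF on `[0,1]` (partition `0, 1/2, 1`, hidden AFIF
component identically zero) with parameters `α₁, α₂` through the data
`(0, w₀), (1/2, w₁), (1, w₂)`. -/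
def IsSAFIF2 (α₁ α₂ : ℝ) (f : ℝ → ℝ) (w₀ w₁ w₂ : ℝ) : Prop :=
  ContinuousOn f (Icc (0 : ℝ) 1) ∧
  (∃ c₁ d₁ c₂ d₂ : ℝ, ∀ u ∈ Icc (0 : ℝ) 1,
    f (u / 2) = α₁ * f u + (c₁ * u + d₁) ∧
    f ((u + 1) / 2) = α₂ * f u + (c₂ * u + d₂)) ∧
  f 0 = w₀ ∧ f (1 / 2) = w₁ ∧ f 1 = w₂

/-- The polynomial `ρ(α₁, α₂)` of the paper. -/
def rho (a₁ a₂ : ℝ) : ℝ :=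
  8 + 12 * a₁ - 28 * a₁ ^ 2 + 6 * a₁ ^ 3 + 2 * a₁ ^ 4 + 12 * a₂ - 14 * a₁ * a₂ +
    18 * a₁ ^ 2 * a₂ - 7 * a₁ ^ 3 * a₂ - 28 * a₂ ^ 2 + 18 * a₁ * a₂ ^ 2 +
    6 * a₂ ^ 3 - 7 * a₁ * a₂ ^ 3 + 2 * a₂ ^ 4


open MeasureTheory intervalIntegral

theorem integral_unitInterval_eq_halves {g : ℝ → ℝ} (hg : ContinuousOn g (Icc 0 1)) :
    ∫ u in (0:ℝ)..1, g u =
      ((∫ u in (0:ℝ)..1, g (u / 2)) + ∫ u in (0:ℝ)..1, g ((u + 1) / 2)) / 2 := by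
  have hleft : ∫ u in (0:ℝ)..1, g (u / 2) = 2 * ∫ x in (0:ℝ)..1 / 2, g x := by
    simp [integral_comp_div g two_ne_zero]
  have hright : ∫ u in (0:ℝ)..1, g ((u + 1) / 2) = 2 * ∫ x in (1 / 2 : ℝ)..1, g x := by
    simp_rw [add_div]
    rw [integral_comp_div_add g two_ne_zero]
    norm_num
  have hint : ∀ {a b : ℝ}, Icc a b ⊆ Icc 0 1 → a ≤ b → IntervalIntegrable g volume a b :=
    fun hsub hab => (hg.mono hsub).intervalIntegrable_of_Icc hab
  rw [hleft, hright, ← integral_add_adjacent_intervals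
    (hint (Icc_subset_Icc le_rfl (by norm_num : (1:ℝ) / 2 ≤ 1)) (by norm_num))
    (hint (Icc_subset_Icc (by norm_num : (0:ℝ) ≤ 1 / 2) le_rfl) (by norm_num))]
  ring

/-- The fixed-point equation `f (Lᵢ u) = αᵢ f u + pᵢ u` of the paper on `[0,1]`, with
`L₁ u = u / 2`, `L₂ u = (u + 1) / 2` and `pᵢ u = cᵢ u + dᵢ`. -/
def IsSelfAffine (α₁ α₂ c₁ d₁ c₂ d₂ : ℝ) (f : ℝ → ℝ) : Prop :=
  ∀ u ∈ Icc (0:ℝ) 1,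
    f (u / 2) = α₁ * f u + (c₁ * u + d₁) ∧ f ((u + 1) / 2) = α₂ * f u + (c₂ * u + d₂)

theorem IsSAFIF2.isSelfAffine {α₁ α₂ w₀ w₁ w₂ : ℝ} {f : ℝ → ℝ} (hf : IsSAFIF2 α₁ α₂ f w₀ w₁ w₂) :
    IsSelfAffine α₁ α₂ (w₁ - α₁ * w₂ - (1 - α₁) * w₀) ((1 - α₁) * w₀)
      ((1 - α₂) * w₂ - (w₁ - α₂ * w₀)) (w₁ - α₂ * w₀) f := by
  obtain ⟨-, ⟨c₁, d₁, c₂, d₂, hfe⟩, h₀, h₁, h₂⟩ := hf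
  have at0 := hfe 0 (by norm_num)
  have at1 := hfe 1 (by norm_num)
  norm_num [h₀, h₁, h₂] at at0 at1
  obtain rfl : d₁ = (1 - α₁) * w₀ := by linarith
  obtain rfl : c₁ = w₁ - α₁ * w₂ - (1 - α₁) * w₀ := by linarith
  obtain rfl : d₂ = w₁ - α₂ * w₀ := by linarith
  obtain rfl : c₂ = (1 - α₂) * w₂ - (w₁ - α₂ * w₀) := by linarith
  exact hfe

namespace IsSelfAffine

variable {α₁ α₂ c₁ d₁ c₂ d₂ : ℝ} {f : ℝ → ℝ}

theorem apply_half (hfe : IsSelfAffine α₁ α₂ c₁ d₁ c₂ d₂ f) {u : ℝ} (hu : u ∈ uIcc 0 1) :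
    f (u / 2) = α₁ * f u + (c₁ * u + d₁) :=
  (hfe u (by rwa [uIcc_of_le zero_le_one] at hu)).1

theorem apply_half_add_half (hfe : IsSelfAffine α₁ α₂ c₁ d₁ c₂ d₂ f) {u : ℝ}
    (hu : u ∈ uIcc 0 1) : f ((u + 1) / 2) = α₂ * f u + (c₂ * u + d₂) :=
  (hfe u (by rwa [uIcc_of_le zero_le_one] at hu)).2

theorem integral_eq (hfe : IsSelfAffine α₁ α₂ c₁ d₁ c₂ d₂ f) (hf : ContinuousOn f (Icc 0 1)) :
    (2 - α₁ - α₂) * ∫ u in (0:ℝ)..1, f u = (c₁ + c₂) / 2 + d₁ + d₂ := by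
  -- linear terms are written `u * c`: `fun u => c * u` is eta-reduced, and then no
  -- `integral_const_mul` pattern matches it
  have hleft : ∫ u in (0:ℝ)..1, f (u / 2) = ∫ u in (0:ℝ)..1, α₁ * f u + (u * c₁ + d₁) :=
    integral_congr fun u hu => by simp only [hfe.apply_half hu]; ring
  have hright : ∫ u in (0:ℝ)..1, f ((u + 1) / 2) = ∫ u in (0:ℝ)..1, α₂ * f u + (u * c₂ + d₂) :=
    integral_congr fun u hu => by simp only [hfe.apply_half_add_half hu]; ring
  have hsplit := integral_unitInterval_eq_halves hf
  rw [hleft, hright] at hsplit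
  simp (disch := exact ContinuousOn.intervalIntegrable_of_Icc zero_le_one (by fun_prop)) only
    [intervalIntegral.integral_add, intervalIntegral.integral_const_mul,
      intervalIntegral.integral_mul_const, integral_id, intervalIntegral.integral_const] at hsplit
  norm_num at hsplit
  linarith

theorem integral_id_mul_eq (hfe : IsSelfAffine α₁ α₂ c₁ d₁ c₂ d₂ f)
    (hf : ContinuousOn f (Icc 0 1)) :
    (4 - α₁ - α₂) * ∫ u in (0:ℝ)..1, u * f u =
      α₂ * (∫ u in (0:ℝ)..1, f u) + (c₁ + c₂) / 3 + c₂ / 2 + (d₁ + 3 * d₂) / 2 := by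
  have hleft : ∫ u in (0:ℝ)..1, u / 2 * f (u / 2) =
      ∫ u in (0:ℝ)..1, α₁ / 2 * (u * f u) + (u ^ 2 * (c₁ / 2) + u * (d₁ / 2)) :=
    integral_congr fun u hu => by simp only [hfe.apply_half hu]; ring
  have hright : ∫ u in (0:ℝ)..1, (u + 1) / 2 * f ((u + 1) / 2) =
      ∫ u in (0:ℝ)..1, α₂ / 2 * (u * f u) + α₂ / 2 * f u +
        (u ^ 2 * (c₂ / 2) + u * ((c₂ + d₂) / 2) + d₂ / 2) :=
    integral_congr fun u hu => by simp only [hfe.apply_half_add_half hu]; ring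
  have hsplit := integral_unitInterval_eq_halves (g := fun u => u * f u) (by fun_prop)
  rw [hleft, hright] at hsplit
  simp (disch := exact ContinuousOn.intervalIntegrable_of_Icc zero_le_one (by fun_prop)) only
    [intervalIntegral.integral_add, intervalIntegral.integral_const_mul,
      intervalIntegral.integral_mul_const, integral_id, integral_pow,
      intervalIntegral.integral_const] at hsplit
  norm_num at hsplit
  linarith

theorem integral_mul_eq {e₁ k₁ e₂ k₂ : ℝ} {g : ℝ → ℝ}
    (hfe : IsSelfAffine α₁ α₂ c₁ d₁ c₂ d₂ f) (hge : IsSelfAffine α₁ α₂ e₁ k₁ e₂ k₂ g)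
    (hf : ContinuousOn f (Icc 0 1)) (hg : ContinuousOn g (Icc 0 1)) :
    (2 - α₁ ^ 2 - α₂ ^ 2) * ∫ u in (0:ℝ)..1, f u * g u =
      α₁ * (e₁ * (∫ u in (0:ℝ)..1, u * f u) + k₁ * (∫ u in (0:ℝ)..1, f u) +
          c₁ * (∫ u in (0:ℝ)..1, u * g u) + d₁ * ∫ u in (0:ℝ)..1, g u) +
        α₂ * (e₂ * (∫ u in (0:ℝ)..1, u * f u) + k₂ * (∫ u in (0:ℝ)..1, f u) +
          c₂ * (∫ u in (0:ℝ)..1, u * g u) + d₂ * ∫ u in (0:ℝ)..1, g u) +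
        (c₁ * e₁ + c₂ * e₂) / 3 + (c₁ * k₁ + d₁ * e₁ + c₂ * k₂ + d₂ * e₂) / 2 +
        d₁ * k₁ + d₂ * k₂ := by
  have hleft : ∫ u in (0:ℝ)..1, f (u / 2) * g (u / 2) =
      ∫ u in (0:ℝ)..1, α₁ ^ 2 * (f u * g u) +
        α₁ * (e₁ * (u * f u) + k₁ * f u + c₁ * (u * g u) + d₁ * g u) +
        (u ^ 2 * (c₁ * e₁) + u * (c₁ * k₁ + d₁ * e₁) + d₁ * k₁) :=
    integral_congr fun u hu => by simp only [hfe.apply_half hu, hge.apply_half hu]; ring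
  have hright : ∫ u in (0:ℝ)..1, f ((u + 1) / 2) * g ((u + 1) / 2) =
      ∫ u in (0:ℝ)..1, α₂ ^ 2 * (f u * g u) +
        α₂ * (e₂ * (u * f u) + k₂ * f u + c₂ * (u * g u) + d₂ * g u) +
        (u ^ 2 * (c₂ * e₂) + u * (c₂ * k₂ + d₂ * e₂) + d₂ * k₂) :=
    integral_congr fun u hu => by
      simp only [hfe.apply_half_add_half hu, hge.apply_half_add_half hu]; ring
  have hsplit := integral_unitInterval_eq_halves (g := fun u => f u * g u) (by fun_prop)
  rw [hleft, hright] at hsplit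
  simp (disch := exact ContinuousOn.intervalIntegrable_of_Icc zero_le_one (by fun_prop)) only
    [intervalIntegral.integral_add, intervalIntegral.integral_const_mul,
      intervalIntegral.integral_mul_const, integral_id, integral_pow,
      intervalIntegral.integral_const] at hsplit
  norm_num at hsplit
  linarith

end IsSelfAffine

theorem denominators_pos_of_abs_lt_one {α₁ α₂ : ℝ} (hα₁ : |α₁| < 1) (hα₂ : |α₂| < 1) :
    0 < 2 - α₁ - α₂ ∧ 0 < 4 - α₁ - α₂ ∧ 0 < 2 - α₁ ^ 2 - α₂ ^ 2 ∧
      -4 + α₁ ^ 2 - α₁ * α₂ + α₂ ^ 2 < 0 := by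
  obtain ⟨h₁, h₁'⟩ := abs_lt.mp hα₁
  obtain ⟨h₂, h₂'⟩ := abs_lt.mp hα₂
  refine ⟨by linarith, by linarith, by nlinarith, by nlinarith⟩

theorem stmt15_general (α₁ α₂ r₁ s₁ : ℝ)
    (hα₁ : |α₁| < 1) (hα₂ : |α₂| < 1)
    (f0 f2 : ℝ → ℝ)
    (hf0 : IsSAFIF2 α₁ α₂ f0 1 r₁ 0)
    (hf2 : IsSAFIF2 α₁ α₂ f2 0 s₁ 1)
    (hr₁ : r₁ = (4 - 4 * α₁ ^ 2 - 6 * α₂ - 2 * α₁ * α₂ + 3 * α₁ ^ 2 * α₂ -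
                  4 * α₂ ^ 2 + 3 * α₂ ^ 3) /
                (4 * (-4 + α₁ ^ 2 - α₁ * α₂ + α₂ ^ 2)))
    (hs₁ : s₁ = (4 - 6 * α₁ - 4 * α₁ ^ 2 + 3 * α₁ ^ 3 - 2 * α₁ * α₂ -
                  4 * α₂ ^ 2 + 3 * α₁ * α₂ ^ 2) /
                (4 * (-4 + α₁ ^ 2 - α₁ * α₂ + α₂ ^ 2))) :
    (∫ u in (0:ℝ)..1, f0 u * f2 u) =
      rho α₁ α₂ /
        (12 * (-4 + α₁ ^ 2 - α₁ * α₂ + α₂ ^ 2) *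
          (8 - 6 * α₁ + α₁ ^ 2 - 6 * α₂ + 2 * α₁ * α₂ + α₂ ^ 2)) ∧
    ((∫ u in (0:ℝ)..1, f0 u * f2 u) = 0 ↔ rho α₁ α₂ = 0) := by
  obtain ⟨hσ₂, hσ₄, hq, hD⟩ := denominators_pos_of_abs_lt_one hα₁ hα₂
  have hsa0 := hf0.isSelfAffine
  have hsa2 := hf2.isSelfAffine
  have hI0 := eq_div_of_mul_eq hσ₂.ne' <| (mul_comm _ _).trans <| hsa0.integral_eq hf0.1
  have hI2 := eq_div_of_mul_eq hσ₂.ne' <| (mul_comm _ _).trans <| hsa2.integral_eq hf2.1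
  have hM0 := eq_div_of_mul_eq hσ₄.ne' <| (mul_comm _ _).trans <| hsa0.integral_id_mul_eq hf0.1
  have hM2 := eq_div_of_mul_eq hσ₄.ne' <| (mul_comm _ _).trans <| hsa2.integral_id_mul_eq hf2.1
  have hJ := eq_div_of_mul_eq hq.ne' <| (mul_comm _ _).trans <|
    hsa0.integral_mul_eq hsa2 hf0.1 hf2.1
  have hden : 12 * (-4 + α₁ ^ 2 - α₁ * α₂ + α₂ ^ 2) *
      (8 - 6 * α₁ + α₁ ^ 2 - 6 * α₂ + 2 * α₁ * α₂ + α₂ ^ 2) ≠ 0 := by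
    have hE : 0 < 8 - 6 * α₁ + α₁ ^ 2 - 6 * α₂ + 2 * α₁ * α₂ + α₂ ^ 2 := by
      nlinarith [mul_pos hσ₂ hσ₄]
    exact mul_ne_zero (mul_ne_zero (by norm_num) hD.ne) hE.ne'
  have hvalue : (∫ u in (0:ℝ)..1, f0 u * f2 u) = rho α₁ α₂ /
      (12 * (-4 + α₁ ^ 2 - α₁ * α₂ + α₂ ^ 2) *
        (8 - 6 * α₁ + α₁ ^ 2 - 6 * α₂ + 2 * α₁ * α₂ + α₂ ^ 2)) := by
    rw [hJ, hM0, hM2, hI0, hI2, rho, eq_div_iff hden]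
    subst hr₁ hs₁
    -- `field_simp` needs the denominator of `r₁` and `s₁` to be nonzero in its own form
    have := hD.ne
    field_simp
    ring
  exact ⟨hvalue, by rw [hvalue, div_eq_zero_iff, or_iff_left hden]⟩

/-- With `r₁` and `s₁` given by the stated formulas,
`⟨f̃_{0,1}, f̃_{2,1}⟩ = ρ(α₁,α₂) / (12(−4+α₁²−α₁α₂+α₂²)(8−6α₁+α₁²−6α₂+2α₁α₂+α₂²))`;
in particular `⟨f̃_{0,1}, f̃_{2,1}⟩ = 0` iff `ρ(α₁, α₂) = 0`. -/
theorem stmt15 (α₁ α₂ β₁ β₂ γ₁ γ₂ r₁ s₁ : ℝ)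
    (hα₁ : |α₁| < 1) (hα₂ : |α₂| < 1) (hγ₁ : |γ₁| < 1) (hγ₂ : |γ₂| < 1)
    (hβγ₁ : |β₁| + |γ₁| < 1) (hβγ₂ : |β₂| + |γ₂| < 1)
    (f0 f2 : ℝ → ℝ)
    (hf0 : IsSAFIF2 α₁ α₂ f0 1 r₁ 0)
    (hf2 : IsSAFIF2 α₁ α₂ f2 0 s₁ 1)
    (hr₁ : r₁ = (4 - 4 * α₁ ^ 2 - 6 * α₂ - 2 * α₁ * α₂ + 3 * α₁ ^ 2 * α₂ -
                  4 * α₂ ^ 2 + 3 * α₂ ^ 3) /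
                (4 * (-4 + α₁ ^ 2 - α₁ * α₂ + α₂ ^ 2)))
    (hs₁ : s₁ = (4 - 6 * α₁ - 4 * α₁ ^ 2 + 3 * α₁ ^ 3 - 2 * α₁ * α₂ -
                  4 * α₂ ^ 2 + 3 * α₁ * α₂ ^ 2) /
                (4 * (-4 + α₁ ^ 2 - α₁ * α₂ + α₂ ^ 2))) :
    (∫ u in (0:ℝ)..1, f0 u * f2 u) =
      rho α₁ α₂ /
        (12 * (-4 + α₁ ^ 2 - α₁ * α₂ + α₂ ^ 2) *
          (8 - 6 * α₁ + α₁ ^ 2 - 6 * α₂ + 2 * α₁ * α₂ + α₂ ^ 2)) ∧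
    ((∫ u in (0:ℝ)..1, f0 u * f2 u) = 0 ↔ rho α₁ α₂ = 0) :=
  stmt15_general α₁ α₂ r₁ s₁ hα₁ hα₂ f0 f2 hf0 hf2 hr₁ hs₁
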